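/- Let D be a Fredholm bounded operator on a Hilbert space H such that the commutator [D, f] is compact for every f in a C*-subalgebra A ⊆ B(H). Then for the normalization F = D(P + D*D)^{-1/2}, where P is the projection onto ker D, the commutators [F, f] are compact for all f ∈ A. -/

import Mathlib

/-!
The operators `X` with `[X, f]` compact for all `f ∈ A` form the essential commutant of `A`.
It is a norm-closed *-subalgebra of `B(H)`: it is closed since the compact operators are, and
it is closed under adjoints since `[X*, f] = -[X, f*]*` and adjoints of compact operators are
compact (because `‖T x‖² ≤ ‖T*T x‖ ‖x‖`, total boundedness of `T*T(ball)` passes to `T(ball)`).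
It contains `D`, hence `D*`, and the finite-rank projection `P`, hence `P + D*D`; a closed
*-subalgebra contains every continuous function of its self-adjoint elements, so it contains
`(P + D*D)^{-1/2}` and therefore `F`.
-/

open ContinuousLinearMap Metric Set

theorem TotallyBounded.image_of_forall_dist_lt {α β γ : Type*} [PseudoMetricSpace β]
    [PseudoMetricSpace γ] {f : α → β} {g : α → γ} {s : Set α} (hg : TotallyBounded (g '' s))
    (hfg : ∀ ε > 0, ∃ δ > 0, ∀ x ∈ s, ∀ y ∈ s, dist (g x) (g y) < δ → dist (f x) (f y) < ε) :
    TotallyBounded (f '' s) := by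
  rw [Metric.totallyBounded_iff]
  intro ε hε
  obtain ⟨δ, hδ, hfg⟩ := hfg ε hε
  obtain ⟨t, hts, htf, hcov⟩ := finite_approx_of_totallyBounded hg δ hδ
  obtain ⟨u, hus, huf, hcov⟩ := (exists_subset_image_finite_and
    (p := fun t => g '' s ⊆ ⋃ y ∈ t, ball y δ)).1 ⟨t, hts, htf, hcov⟩
  refine ⟨f '' u, huf.image f, ?_⟩
  rintro _ ⟨x, hx, rfl⟩
  obtain ⟨_, ⟨y, hyu, rfl⟩, hxy⟩ : ∃ z ∈ g '' u, g x ∈ ball z δ := by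
    simpa using hcov (mem_image_of_mem g hx)
  exact mem_biUnion (mem_image_of_mem f hyu) (hfg x hx y (hus hyu) hxy)

section Compact

variable {𝕜 E F : Type*} [RCLike 𝕜] [NormedAddCommGroup E] [InnerProductSpace 𝕜 E]
  [CompleteSpace E] [NormedAddCommGroup F] [InnerProductSpace 𝕜 F] [CompleteSpace F]

theorem norm_apply_sq_le_norm_adjoint_comp_self_apply_mul (T : E →L[𝕜] F) (x : E) :
    ‖T x‖ ^ 2 ≤ ‖(adjoint T ∘L T) x‖ * ‖x‖ := by
  rw [apply_norm_sq_eq_inner_adjoint_left]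
  exact (RCLike.re_le_norm _).trans (norm_inner_le_norm _ _)

theorem IsCompactOperator.of_adjoint_comp_self {T : E →L[𝕜] F}
    (h : IsCompactOperator (adjoint T ∘L T)) : IsCompactOperator T := by
  refine (isCompactOperator_iff_isCompact_closure_image_closedBall (T : E →ₗ[𝕜] F) one_pos).2 ?_
  refine TotallyBounded.isCompact_of_isClosed (TotallyBounded.closure ?_) isClosed_closure
  refine ((h.isCompact_closure_image_closedBall 1).totallyBounded.subset subset_closure
    ).image_of_forall_dist_lt fun ε hε => ⟨ε ^ 2 / 2, by positivity, fun x hx y hy hxy => ?_⟩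
  have hdiam : ‖x - y‖ ≤ 2 := by
    calc ‖x - y‖ ≤ ‖x‖ + ‖y‖ := norm_sub_le x y
      _ ≤ 1 + 1 := add_le_add (mem_closedBall_zero_iff.1 hx) (mem_closedBall_zero_iff.1 hy)
      _ = 2 := by norm_num
  rw [dist_eq_norm, ← map_sub] at hxy ⊢
  rw [← pow_lt_pow_iff_left₀ (norm_nonneg _) hε.le two_ne_zero]
  calc ‖T (x - y)‖ ^ 2 ≤ ‖(adjoint T ∘L T) (x - y)‖ * ‖x - y‖ :=
        norm_apply_sq_le_norm_adjoint_comp_self_apply_mul T (x - y)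
    _ ≤ ‖(adjoint T ∘L T) (x - y)‖ * 2 := by gcongr
    _ < ε ^ 2 / 2 * 2 := by gcongr; exact hxy
    _ = ε ^ 2 := by ring

theorem IsCompactOperator.adjoint {T : E →L[𝕜] F} (h : IsCompactOperator T) :
    IsCompactOperator (ContinuousLinearMap.adjoint T) :=
  .of_adjoint_comp_self <| by
    rw [adjoint_adjoint]
    exact h.comp_clm _

end Compact

theorem isCompactOperator_of_finiteDimensional_range {𝕜 E F : Type*} [NontriviallyNormedField 𝕜]
    [ProperSpace 𝕜] [NormedAddCommGroup E] [NormedSpace 𝕜 E] [NormedAddCommGroup F]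
    [NormedSpace 𝕜 F] (T : E →L[𝕜] F) [FiniteDimensional 𝕜 (LinearMap.range (T : E →ₗ[𝕜] F))] :
    IsCompactOperator T :=
  have : ProperSpace (LinearMap.range (T : E →ₗ[𝕜] F)) := FiniteDimensional.proper 𝕜 _
  (isCompactOperator_of_locallyCompactSpace_dom
    (T.codRestrict (LinearMap.range (T : E →ₗ[𝕜] F)) (LinearMap.mem_range_self (T : E →ₗ[𝕜] F)))).clm_comp
    (LinearMap.range (T : E →ₗ[𝕜] F)).subtypeL

section EssentialCommutant

variable {𝕜 E : Type*} [RCLike 𝕜] [NormedAddCommGroup E] [InnerProductSpace 𝕜 E] [CompleteSpace E]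

def essentialCommutant (A : StarSubalgebra 𝕜 (E →L[𝕜] E)) : StarSubalgebra 𝕜 (E →L[𝕜] E) where
  carrier := {X | ∀ f ∈ A, IsCompactOperator ⇑(X * f - f * X)}
  mul_mem' {X Y} hX hY f hf := by
    rw [show X * Y * f - f * (X * Y) = X * (Y * f - f * Y) + (X * f - f * X) * Y by noncomm_ring]
    exact ((hY f hf).clm_comp X).add ((hX f hf).comp_clm Y)
  add_mem' {X Y} hX hY f hf := by
    rw [show (X + Y) * f - f * (X + Y) = (X * f - f * X) + (Y * f - f * Y) by noncomm_ring]
    exact (hX f hf).add (hY f hf)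
  algebraMap_mem' c f _ := by
    rw [Algebra.commutes, sub_self]
    exact isCompactOperator_zero
  star_mem' {X} hX f hf := by
    rw [show star X * f - f * star X = -star (X * star f - star f * X) by
      simp only [star_sub, star_mul, star_star]; noncomm_ring]
    exact (hX _ (star_mem hf)).adjoint.neg

variable {A : StarSubalgebra 𝕜 (E →L[𝕜] E)}

theorem mem_essentialCommutant_of_isCompactOperator {X : E →L[𝕜] E} (hX : IsCompactOperator X) :
    X ∈ essentialCommutant A := fun f _ =>
  (hX.comp_clm f).sub (hX.clm_comp f)

theorem isClosed_essentialCommutant (A : StarSubalgebra 𝕜 (E →L[𝕜] E)) :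
    IsClosed (essentialCommutant A : Set (E →L[𝕜] E)) := by
  have : (essentialCommutant A : Set (E →L[𝕜] E)) =
      ⋂ f ∈ A, (fun X => X * f - f * X) ⁻¹' {T | IsCompactOperator T} := by
    ext; simp [essentialCommutant]
  rw [this]
  exact isClosed_biInter fun f _ => isClosed_setOfPred_isCompactOperator.preimage (by fun_prop)

end EssentialCommutant

theorem stmt_3_general {H : Type*}
    [NormedAddCommGroup H] [InnerProductSpace ℂ H] [CompleteSpace H]
    (D : H →L[ℂ] H)
    (hker : FiniteDimensional ℂ (LinearMap.ker (D : H →ₗ[ℂ] H)))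
    (A : StarSubalgebra ℂ (H →L[ℂ] H))
    (hcomm : ∀ f ∈ A, IsCompactOperator ⇑(D * f - f * D))
    (P : H →L[ℂ] H)
    (hP3 : LinearMap.range (P : H →ₗ[ℂ] H) = LinearMap.ker (D : H →ₗ[ℂ] H))
    (F : H →L[ℂ] H)
    (hF : F = D * cfc (fun x : ℝ => x ^ (-(1/2) : ℝ)) (P + adjoint D * D)) :
    ∀ f ∈ A, IsCompactOperator ⇑(F * f - f * F) := by
  have hD : D ∈ essentialCommutant A := hcomm
  have hP : P ∈ essentialCommutant A :=
    have : FiniteDimensional ℂ (LinearMap.range (P : H →ₗ[ℂ] H)) := hP3 ▸ hker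
    mem_essentialCommutant_of_isCompactOperator (isCompactOperator_of_finiteDimensional_range P)
  have hT : P + adjoint D * D ∈ essentialCommutant A :=
    add_mem hP (mul_mem (star_mem hD) hD)
  rw [hF]
  exact mul_mem hD (cfc_mem (hs := isClosed_essentialCommutant A) _ hT)

/-- if `D` is a Fredholm operator on a Hilbert space `H` whose commutators
`[D, f]` with all elements `f` of a C*-subalgebra `A ⊆ B(H)` are compact, then the
normalization `F = D (P + D*D)^{-1/2}` (with `P` the orthogonal projection onto `ker D`)
also has compact commutators `[F, f]` for all `f ∈ A`. -/
theorem stmt_3 {H : Type*}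
    [NormedAddCommGroup H] [InnerProductSpace ℂ H] [CompleteSpace H]
    (D : H →L[ℂ] H)
    (hker : FiniteDimensional ℂ (LinearMap.ker (D : H →ₗ[ℂ] H)))
    (hcoker : FiniteDimensional ℂ (H ⧸ LinearMap.range (D : H →ₗ[ℂ] H)))
    (hclosed : IsClosed (LinearMap.range (D : H →ₗ[ℂ] H) : Set H))
    (A : StarSubalgebra ℂ (H →L[ℂ] H)) (hA : IsClosed (A : Set (H →L[ℂ] H)))
    (hcomm : ∀ f ∈ A, IsCompactOperator ⇑(D * f - f * D))
    (P : H →L[ℂ] H) (hP1 : IsIdempotentElem P) (hP2 : IsSelfAdjoint P)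
    (hP3 : LinearMap.range (P : H →ₗ[ℂ] H) = LinearMap.ker (D : H →ₗ[ℂ] H))
    (F : H →L[ℂ] H)
    (hF : F = D * cfc (fun x : ℝ => x ^ (-(1/2) : ℝ)) (P + adjoint D * D)) :
    ∀ f ∈ A, IsCompactOperator ⇑(F * f - f * F) :=
  stmt_3_general D hker A hcomm P hP3 F hF
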